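/- For all pairs w ≤ y in W there exist unique elements Q_{w,y} ∈ R such that for all w ≤ z in W one has Σ_{w ≤ y ≤ z} (−1)^{ℓ(y)−ℓ(w)} Q_{w,y} P_{y,z} = δ_{w,z}. Moreover each Q_{w,y} lies in ℤ[q], Q_{w,w} = 1, and deg Q_{w,y} ≤ (ℓ(y)−ℓ(w)−1)/2 whenever w < y. -/

import Mathlib

namespace KLPaper

open Polynomial
open scoped Classical

variable {B : Type*} {W : Type*} [Group W] {M : CoxeterMatrix B}

/-- The Bruhat order on a Coxeter group: generated by right multiplication by
reflections which increases the length. -/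
def bruhatLE (cs : CoxeterSystem M W) : W → W → Prop :=
  Relation.ReflTransGen (fun x y =>
    (∃ t, cs.IsReflection t ∧ y = x * t) ∧ cs.length x < cs.length y)

/-- A commutative ring `R` containing `ℤ[q,q⁻¹]`, with a direct sum decomposition
`R = ⊕_{k ∈ ℤ} R_k` into additive subgroups and an involutive ring endomorphism `conj`
such that `R_i R_j ⊆ R_{i+j}`, `conj R_i = R_{-i}`, `1 ∈ R_0`, `q ∈ R_2`, `conj q = q⁻¹`. -/
structure KLRing (R : Type*) [CommRing R] where
  q : R
  qinv : R
  q_qinv : q * qinv = 1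
  grade : ℤ → AddSubgroup R
  decomp : DirectSum.IsInternal grade
  conj : R →+* R
  conj_conj : ∀ r : R, conj (conj r) = r
  grade_mul : ∀ (i j : ℤ) (r s : R), r ∈ grade i → s ∈ grade j → r * s ∈ grade (i + j)
  conj_grade : ∀ (i : ℤ) (r : R), r ∈ grade i → conj r ∈ grade (-i)
  one_mem : (1 : R) ∈ grade 0
  q_mem : q ∈ grade 2
  conj_q : conj q = qinv
  laurent_inj : Function.Injective fun f : ℤ →₀ ℤ =>
    f.sum fun k c => c • (if 0 ≤ k then q ^ k.toNat else qinv ^ (-k).toNat)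

variable {R : Type*} [CommRing R]

/-- The subgroup `R_0 + R_1 + ⋯ + R_{n-1} = ⊕_{i=0}^{n-1} R_i` of `R`. -/
def KLRing.gradeSum (K : KLRing R) (n : ℕ) : AddSubgroup R :=
  ⨆ i ∈ Finset.range n, K.grade (i : ℤ)

/-- `r` belongs to `ℤ[q] ⊆ R`. -/
def KLRing.InZq (K : KLRing R) (r : R) : Prop :=
  ∃ p : Polynomial ℤ, Polynomial.aeval K.q p = r

/-- The Hecke algebra of `(W, S)` over `R`: the free `R`-module with basis
`{T_w}_{w ∈ W}`, with multiplication determined by `T_{w₁} T_{w₂} = T_{w₁ w₂}`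
whenever `ℓ(w₁w₂) = ℓ(w₁) + ℓ(w₂)` and `(T_s + 1)(T_s - q) = 0` for `s ∈ S`. -/
structure Hecke (cs : CoxeterSystem M W) (R : Type*) [CommRing R] (q : R) where
  carrier : Type*
  [ring : Ring carrier]
  [alg : Algebra R carrier]
  T : W → carrier
  basis : Module.Basis W R carrier
  basis_eq : ∀ w : W, basis w = T w
  T_mul : ∀ w₁ w₂ : W, cs.length (w₁ * w₂) = cs.length w₁ + cs.length w₂ →
    T w₁ * T w₂ = T (w₁ * w₂)
  T_quad : ∀ i : B, (T (cs.simple i) + 1) * (T (cs.simple i) - algebraMap R carrier q) = 0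

attribute [instance] Hecke.ring Hecke.alg

variable {cs : CoxeterSystem M W}

/-- `bar` is the bar involution `Σ r_w T_w ↦ Σ conj(r_w) (T_{w⁻¹})⁻¹` of the Hecke algebra. -/
def IsBar (K : KLRing R) (Hk : Hecke cs R K.q) (bar : Hk.carrier →+* Hk.carrier) : Prop :=
  ∀ (r : R) (w : W), bar (r • Hk.T w) = K.conj r • Ring.inverse (Hk.T w⁻¹)

/-- `j` is the involution `j(Σ r_w T_w) = Σ r_w (-q)^{ℓ(w)} (T_{w⁻¹})⁻¹` of the Hecke algebra. -/
def IsJ (K : KLRing R) (Hk : Hecke cs R K.q) (j : Hk.carrier →ₐ[R] Hk.carrier) : Prop :=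
  ∀ w : W, j (Hk.T w) = (-K.q) ^ cs.length w • Ring.inverse (Hk.T w⁻¹)

/-- `C` is the Kazhdan–Lusztig basis element `C_w`:
`C = Σ_{y ≤ w} P_{y,w} T_y` with `P_{w,w} = 1`,
`P_{y,w} ∈ ⊕_{i=0}^{ℓ(w)-ℓ(y)-1} R_i` for `y < w`, and `bar C = q^{-ℓ(w)} C`.
(The coefficient `P_{y,w}` of `C_w` is `Hk.basis.repr C y`.) -/
def IsKLElt (K : KLRing R) (Hk : Hecke cs R K.q)
    (bar : Hk.carrier →+* Hk.carrier) (w : W) (C : Hk.carrier) : Prop :=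
  Hk.basis.repr C w = 1 ∧
  (∀ y : W, Hk.basis.repr C y ≠ 0 → bruhatLE cs y w) ∧
  (∀ y : W, bruhatLE cs y w → y ≠ w →
    Hk.basis.repr C y ∈ K.gradeSum (cs.length w - cs.length y)) ∧
  bar C = K.qinv ^ cs.length w • C

/-- The standard parabolic subgroup `W_J = ⟨J⟩`. -/
def WJ (cs : CoxeterSystem M W) (J : Set B) : Subgroup W :=
  Subgroup.closure (cs.simple '' J)

/-- `W^J`: the set of minimal length coset representatives of `W/W_J`,
i.e. the `w ∈ W` with `ws > w` for all `s ∈ J`. -/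
def minReps (cs : CoxeterSystem M W) (J : Set B) : Set W :=
  {w | ∀ i ∈ J, cs.length w < cs.length (w * cs.simple i)}

/-- The Hecke algebra `H(W_J)` of the standard parabolic subgroup `W_J`
(with generating set `J`; the length function of `(W_J, J)` is the restriction
of that of `(W, S)`). -/
structure HeckeJ (cs : CoxeterSystem M W) (J : Set B) (R : Type*) [CommRing R] (q : R) where
  carrier : Type*
  [ring : Ring carrier]
  [alg : Algebra R carrier]
  T : WJ cs J → carrier
  basis : Module.Basis (WJ cs J) R carrier
  basis_eq : ∀ x, basis x = T x
  T_mul : ∀ x₁ x₂ : WJ cs J,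
    cs.length ((x₁ : W) * (x₂ : W)) = cs.length (x₁ : W) + cs.length (x₂ : W) →
    T x₁ * T x₂ = T (x₁ * x₂)
  T_quad : ∀ (i : B) (hi : i ∈ J),
    (T ⟨cs.simple i, Subgroup.subset_closure ⟨i, hi, rfl⟩⟩ + 1) *
      (T ⟨cs.simple i, Subgroup.subset_closure ⟨i, hi, rfl⟩⟩ - algebraMap R carrier q) = 0

attribute [instance] HeckeJ.ring HeckeJ.alg

/-- `(Mod, φ)` is (a realization of) the induced module `H^{J,a} = H ⊗_{H(W_J)} R^a`
together with `φ = φ^{J,a} : h ↦ h ⊗ 1^a`:  `φ` is surjective and its kernel is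
the `R`-span of the elements `h (T_s - a)`, `s ∈ J`, which is exactly the kernel of
`h ↦ h ⊗ 1^a`. -/
def IsInduced {q : R} (Hk : Hecke cs R q) (J : Set B) (a : R)
    (Mod : Type*) [AddCommGroup Mod] [Module R Mod] (φ : Hk.carrier →ₗ[R] Mod) : Prop :=
  Function.Surjective φ ∧
  LinearMap.ker φ = Submodule.span R
    {h : Hk.carrier | ∃ (g : Hk.carrier) (i : B), i ∈ J ∧
      h = g * (Hk.T (cs.simple i) - algebraMap R Hk.carrier a)}

/-- `C` is the parabolic Kazhdan–Lusztig basis element `C_w^{J,a}` of `H^{J,a}`: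
`C = Σ_{y ∈ W^J, y ≤ w} P^{J,a}_{y,w} T_y^{J,a}` with `P^{J,a}_{w,w} = 1`,
`P^{J,a}_{y,w} ∈ ⊕_{i=0}^{ℓ(w)-ℓ(y)-1} R_i` for `y < w`, and `barJ C = q^{-ℓ(w)} C`,
where `b` is the basis `(T_y^{J,a})_{y ∈ W^J}` of `H^{J,a}` and `barJ` its bar involution.
(The coefficient `P^{J,a}_{y,w}` of `C_w^{J,a}` is `b.repr C y`.) -/
def IsKLEltJ (K : KLRing R) {J : Set B} {Mod : Type*} [AddCommGroup Mod] [Module R Mod]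
    (b : Module.Basis (minReps cs J) R Mod) (barJ : Mod →+ Mod)
    (w : minReps cs J) (C : Mod) : Prop :=
  b.repr C w = 1 ∧
  (∀ y : minReps cs J, b.repr C y ≠ 0 → bruhatLE cs y.1 w.1) ∧
  (∀ y : minReps cs J, bruhatLE cs y.1 w.1 → y ≠ w →
    b.repr C y ∈ K.gradeSum (cs.length w.1 - cs.length y.1)) ∧
  barJ C = K.qinv ^ cs.length w.1 • C

/-!
`Q_{w,y} = (-1)^{ℓ(y)-ℓ(w)} N_{w,y}`, where `N` is the left inverse of the unitriangular
matrix `(P_{y,z})`, computed by recursion on `ℓ(z)`; the same recursion gives uniqueness.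

The substance is the degree bound. Since `T̄_y = (T_{y⁻¹})⁻¹` is `q^{-ℓ(y)} T_y` plus terms of
smaller length with coefficients in `ℤ[q, q⁻¹]`, comparing coefficients of `T_x` in
`C̄_w = q^{-ℓ(w)} C_w` gives, by induction on `ℓ(w) - ℓ(x)`,
`P_{x,w} = q^n P̄_{x,w} + A` with `n = ℓ(w) - ℓ(x)` and `A ∈ ℤ[q, q⁻¹]`. As `P_{x,w}` lives in
degrees `0, …, n - 1` of the grading and `q^n P̄_{x,w}` in degrees `> n`, `P_{x,w}` is the part of
`A` of degree `< n`, a polynomial in `q` of degree `≤ (n - 1)/2`. The recursion for `N` then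
preserves these bounds, because `(a - 1)/2 + (b - 1)/2 ≤ (a + b - 1)/2`.
-/

lemma bruhatLE.length_le {x y : W} (h : bruhatLE cs x y) : cs.length x ≤ cs.length y := by
  induction h with
  | refl => exact le_rfl
  | tail _ step ih => exact ih.trans step.2.le

lemma bruhatLE.length_lt {x y : W} (h : bruhatLE cs x y) (hne : x ≠ y) :
    cs.length x < cs.length y := by
  rcases Relation.ReflTransGen.cases_tail h with rfl | ⟨c, hc, step⟩
  · exact absurd rfl hne
  · exact (bruhatLE.length_le hc).trans_lt step.2

namespace KLRing

open LaurentPolynomial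

variable (K : KLRing R)

def qU : Rˣ := ⟨K.q, K.qinv, K.q_qinv, by rw [mul_comm, K.q_qinv]⟩

@[simp] lemma val_qU : (K.qU : R) = K.q := rfl

lemma qinv_mem_grade : K.qinv ∈ K.grade (-2) := K.conj_q ▸ K.conj_grade 2 _ K.q_mem

lemma qU_zpow_mem_grade (k : ℤ) : ((K.qU ^ k : Rˣ) : R) ∈ K.grade (2 * k) := by
  induction k using Int.induction_on with
  | zero => simpa using K.one_mem
  | succ k ih =>
    rw [zpow_add_one, Units.val_mul, mul_add_one]
    exact K.grade_mul _ _ _ _ ih K.q_mem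
  | pred k ih =>
    rw [zpow_sub_one, Units.val_mul, mul_sub_one, sub_eq_add_neg]
    exact K.grade_mul _ _ _ _ ih K.qinv_mem_grade

lemma q_pow_mem_grade (n : ℕ) : K.q ^ n ∈ K.grade (2 * n) := by
  simpa using K.qU_zpow_mem_grade n

lemma conj_qU_zpow (k : ℤ) : K.conj ((K.qU ^ k : Rˣ) : R) = ((K.qU ^ (-k) : Rˣ) : R) := by
  have hmap : Units.map (K.conj : R →* R) K.qU = K.qU⁻¹ := Units.ext K.conj_q
  rw [zpow_neg, ← inv_zpow, ← hmap, ← map_zpow, Units.coe_map]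
  rfl

noncomputable def laurent : Subring R := (LaurentPolynomial.eval₂ (Int.castRingHom R) K.qU).range

lemma q_mem_laurent : K.q ∈ K.laurent := ⟨T 1, by simp⟩

lemma qinv_mem_laurent : K.qinv ∈ K.laurent := ⟨T (-1), by simp [qU]⟩

lemma aeval_mem_laurent (p : ℤ[X]) : aeval K.q p ∈ K.laurent :=
  ⟨toLaurent p, by simp [aeval_def, algebraMap_int_eq]⟩

lemma conj_mem_laurent {r : R} (hr : r ∈ K.laurent) : K.conj r ∈ K.laurent := by
  obtain ⟨f, rfl⟩ := hr
  induction f using LaurentPolynomial.induction_on' with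
  | add f g hf hg => rw [map_add, map_add]; exact add_mem hf hg
  | C_mul_T k a => exact ⟨LaurentPolynomial.C a * T (-k), by simp [K.conj_qU_zpow]⟩

noncomputable def zqDegLE (d : ℕ) : Submodule ℤ R :=
  (degreeLE ℤ d).map (aeval K.q).toLinearMap

variable {K}

lemma mem_zqDegLE {d : ℕ} {r : R} :
    r ∈ K.zqDegLE d ↔ ∃ p : ℤ[X], p.natDegree ≤ d ∧ aeval K.q p = r := by
  simp [zqDegLE, mem_degreeLE, natDegree_le_iff_degree_le]

lemma zqDegLE_mono {d e : ℕ} (h : d ≤ e) : K.zqDegLE d ≤ K.zqDegLE e :=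
  Submodule.map_mono (degreeLE_mono (by exact_mod_cast h))

lemma one_mem_zqDegLE : (1 : R) ∈ K.zqDegLE 0 :=
  mem_zqDegLE.2 ⟨1, by simp⟩

lemma mul_mem_zqDegLE {d e : ℕ} {r s : R} (hr : r ∈ K.zqDegLE d) (hs : s ∈ K.zqDegLE e) :
    r * s ∈ K.zqDegLE (d + e) := by
  obtain ⟨p, hp, rfl⟩ := mem_zqDegLE.1 hr
  obtain ⟨p', hp', rfl⟩ := mem_zqDegLE.1 hs
  exact mem_zqDegLE.2 ⟨p * p', natDegree_mul_le.trans (add_le_add hp hp'), map_mul _ _ _⟩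

lemma laurent_of_mem_zqDegLE {d : ℕ} {r : R} (hr : r ∈ K.zqDegLE d) : r ∈ K.laurent := by
  obtain ⟨p, -, rfl⟩ := mem_zqDegLE.1 hr
  exact K.aeval_mem_laurent p

variable (K)

noncomputable instance : DirectSum.Decomposition K.grade := K.decomp.chooseDecomposition

noncomputable def truncBelow (n : ℕ) : R →+ R where
  toFun r := ∑ i ∈ Finset.range n, (DirectSum.decompose K.grade r i : R)
  map_zero' := by simp
  map_add' r s := by simp [Finset.sum_add_distrib]

variable {K}

lemma truncBelow_of_mem_grade {n : ℕ} {j : ℤ} {r : R} (hr : r ∈ K.grade j) :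
    K.truncBelow n r = if 0 ≤ j ∧ j < n then r else 0 := by
  have hdec : ∀ i : ℕ, (DirectSum.decompose K.grade r i : R) = if (i : ℤ) = j then r else 0 := by
    intro i
    split_ifs with h
    · exact DirectSum.decompose_of_mem_same _ (h ▸ hr)
    · exact DirectSum.decompose_of_mem_ne _ hr (Ne.symm h)
  simp only [truncBelow, AddMonoidHom.coe_mk, ZeroHom.coe_mk, hdec]
  split_ifs with h
  · lift j to ℕ using h.1
    simp only [Nat.cast_inj, Finset.sum_ite_eq', Finset.mem_range]
    exact if_pos (by exact_mod_cast h.2)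
  · refine Finset.sum_eq_zero fun i hi => if_neg ?_
    rintro rfl
    exact h ⟨i.cast_nonneg, by exact_mod_cast Finset.mem_range.1 hi⟩

lemma truncBelow_of_mem_gradeSum {n : ℕ} {r : R} (hr : r ∈ K.gradeSum n) :
    K.truncBelow n r = r := by
  suffices K.gradeSum n ≤ (K.truncBelow n - AddMonoidHom.id R).ker by
    simpa [sub_eq_zero] using this hr
  refine iSup₂_le fun i hi s hs => ?_
  rw [AddMonoidHom.mem_ker, AddMonoidHom.sub_apply, truncBelow_of_mem_grade hs,
    if_pos ⟨i.cast_nonneg, by exact_mod_cast Finset.mem_range.1 hi⟩]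
  exact sub_self s

lemma truncBelow_q_pow_mul_conj {n : ℕ} {r : R} (hr : r ∈ K.gradeSum n) :
    K.truncBelow n (K.q ^ n * K.conj r) = 0 := by
  suffices K.gradeSum n ≤
      ((K.truncBelow n).comp ((AddMonoidHom.mulLeft (K.q ^ n)).comp K.conj.toAddMonoidHom)).ker
    from this hr
  refine iSup₂_le fun i hi s hs => ?_
  have hmem := K.grade_mul _ _ _ _ (K.q_pow_mem_grade n) (K.conj_grade _ _ hs)
  rw [AddMonoidHom.mem_ker]
  simp only [AddMonoidHom.coe_comp, Function.comp_apply, AddMonoidHom.coe_mulLeft,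
    RingHom.toAddMonoidHom_eq_coe, AddMonoidHom.coe_coe]
  rw [truncBelow_of_mem_grade hmem, if_neg]
  have := Finset.mem_range.1 hi
  omega

lemma truncBelow_mem_zqDegLE (n : ℕ) {r : R} (hr : r ∈ K.laurent) :
    K.truncBelow n r ∈ K.zqDegLE ((n - 1) / 2) := by
  obtain ⟨f, rfl⟩ := hr
  induction f using LaurentPolynomial.induction_on' with
  | add f g hf hg => rw [map_add, map_add]; exact add_mem hf hg
  | C_mul_T k a =>
    have hmem : (a : R) * ((K.qU ^ k : Rˣ) : R) ∈ K.grade (2 * k) := by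
      rw [← zsmul_eq_mul]
      exact zsmul_mem (K.qU_zpow_mem_grade k) a
    rw [LaurentPolynomial.eval₂_C_mul_T, eq_intCast, truncBelow_of_mem_grade hmem]
    split_ifs with h
    · lift k to ℕ using by omega
      refine mem_zqDegLE.2 ⟨Polynomial.C a * X ^ k, (natDegree_C_mul_X_pow_le a k).trans ?_, ?_⟩
      · omega
      · simp
    · exact zero_mem _

theorem mem_zqDegLE_of_eq_q_pow_mul_conj_add {n : ℕ} {P A : R} (hP : P ∈ K.gradeSum n)
    (hA : A ∈ K.laurent) (h : P = K.q ^ n * K.conj P + A) : P ∈ K.zqDegLE ((n - 1) / 2) := by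
  have hP_eq : P = K.truncBelow n A := by
    conv_lhs => rw [← truncBelow_of_mem_gradeSum hP, h]
    rw [map_add, truncBelow_q_pow_mul_conj hP, zero_add]
  exact hP_eq ▸ truncBelow_mem_zqDegLE n hA

end KLRing

namespace Hecke

section

variable {q : R} (Hk : Hecke cs R q)

lemma repr_T (x y : W) : Hk.basis.repr (Hk.T x) y = if x = y then 1 else 0 := by
  rw [← Hk.basis_eq, Module.Basis.repr_self, Finsupp.single_apply]

lemma sum_repr_smul_T (h : Hk.carrier) :
    ∑ x ∈ (Hk.basis.repr h).support, Hk.basis.repr h x • Hk.T x = h := by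
  conv_rhs => rw [← Hk.basis.linearCombination_repr h]
  simp [Finsupp.linearCombination_apply, Finsupp.sum, Hk.basis_eq]

lemma T_one : Hk.T 1 = 1 := by
  have hmul : LinearMap.mulLeft R (Hk.T 1) = LinearMap.id :=
    Hk.basis.ext fun w => by simp [Hk.basis_eq, Hk.T_mul 1 w (by simp)]
  simpa using LinearMap.congr_fun hmul 1

lemma T_simple_mul_T_simple (i : B) :
    Hk.T (cs.simple i) * Hk.T (cs.simple i) =
      (q - 1) • Hk.T (cs.simple i) + q • (1 : Hk.carrier) := by
  have h := Hk.T_quad i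
  rw [Algebra.algebraMap_eq_smul_one] at h
  rw [← sub_eq_zero, ← h]
  simp only [add_mul, mul_sub, mul_smul_comm, one_mul, mul_one]
  module

end

variable (K : KLRing R) (Hk : Hecke cs R K.q)

noncomputable def Tinv (i : B) : Hk.carrier :=
  K.qinv • Hk.T (cs.simple i) + (K.qinv - 1) • (1 : Hk.carrier)

lemma T_simple_mul_Tinv (i : B) : Hk.T (cs.simple i) * Tinv K Hk i = 1 := by
  rw [Tinv, mul_add, mul_smul_comm, mul_smul_comm, mul_one, T_simple_mul_T_simple]
  match_scalars <;> linear_combination K.q_qinv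

lemma Tinv_mul_T_simple (i : B) : Tinv K Hk i * Hk.T (cs.simple i) = 1 := by
  rw [Tinv, add_mul, smul_mul_assoc, smul_mul_assoc, one_mul, T_simple_mul_T_simple]
  match_scalars <;> linear_combination K.q_qinv

def laurentBelow (n : ℕ) : AddSubgroup Hk.carrier where
  carrier := {h | ∀ x, Hk.basis.repr h x ∈ K.laurent ∧ (n ≤ cs.length x → Hk.basis.repr h x = 0)}
  add_mem' {a b} ha hb x := by
    simp only [map_add, Finsupp.add_apply]
    exact ⟨add_mem (ha x).1 (hb x).1, fun h => by rw [(ha x).2 h, (hb x).2 h, add_zero]⟩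
  zero_mem' x := by simp [zero_mem]
  neg_mem' {a} ha x := by
    simp only [map_neg, Finsupp.neg_apply, neg_eq_zero]
    exact ⟨neg_mem (ha x).1, (ha x).2⟩

variable {K Hk}

lemma smul_mem_laurentBelow {n : ℕ} {r : R} {h : Hk.carrier} (hr : r ∈ K.laurent)
    (hh : h ∈ laurentBelow K Hk n) : r • h ∈ laurentBelow K Hk n := fun x => by
  simp only [map_smul, Finsupp.smul_apply, smul_eq_mul]
  exact ⟨mul_mem hr (hh x).1, fun h => by rw [(hh x).2 h, mul_zero]⟩

lemma laurentBelow_mono {m n : ℕ} (hmn : m ≤ n) : laurentBelow K Hk m ≤ laurentBelow K Hk n :=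
  fun _ hh x => ⟨(hh x).1, fun h => (hh x).2 (hmn.trans h)⟩

lemma T_mem_laurentBelow {n : ℕ} {x : W} (hx : cs.length x < n) :
    Hk.T x ∈ laurentBelow K Hk n := fun y => by
  rw [Hk.repr_T]
  split_ifs with h
  · exact ⟨one_mem _, fun hy => absurd (h ▸ hy) hx.not_ge⟩
  · exact ⟨zero_mem _, fun _ => rfl⟩

lemma T_simple_mul_T_mem (i : B) (x : W) :
    Hk.T (cs.simple i) * Hk.T x ∈ laurentBelow K Hk (cs.length x + 2) := by
  rcases cs.length_simple_mul x i with hlen | hlen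
  · rw [Hk.T_mul _ _ (by rw [hlen, cs.length_simple, add_comm])]
    exact T_mem_laurentBelow (by omega)
  · have hx : Hk.T x = Hk.T (cs.simple i) * Hk.T (cs.simple i * x) := by
      rw [Hk.T_mul _ _ (by rw [cs.simple_mul_simple_cancel_left, cs.length_simple]; omega),
        cs.simple_mul_simple_cancel_left]
    rw [hx, ← mul_assoc, T_simple_mul_T_simple, add_mul, smul_mul_assoc, smul_mul_assoc, one_mul,
      ← hx]
    refine add_mem (smul_mem_laurentBelow ?_ (T_mem_laurentBelow (by omega)))
      (smul_mem_laurentBelow K.q_mem_laurent (T_mem_laurentBelow (by omega)))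
    exact sub_mem K.q_mem_laurent (one_mem _)

lemma T_simple_mul_mem_laurentBelow (i : B) {n : ℕ} {h : Hk.carrier}
    (hh : h ∈ laurentBelow K Hk n) : Hk.T (cs.simple i) * h ∈ laurentBelow K Hk (n + 1) := by
  rw [← Hk.sum_repr_smul_T h, Finset.mul_sum]
  refine sum_mem fun x hx => ?_
  have hlen : cs.length x < n := by
    by_contra hle
    exact Finsupp.mem_support_iff.1 hx ((hh x).2 (not_lt.1 hle))
  rw [mul_smul_comm]
  exact smul_mem_laurentBelow (hh x).1
    (laurentBelow_mono (by omega) (T_simple_mul_T_mem i x))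

lemma Tinv_mul_mem_laurentBelow (i : B) {n : ℕ} {h : Hk.carrier}
    (hh : h ∈ laurentBelow K Hk n) : Tinv K Hk i * h ∈ laurentBelow K Hk (n + 1) := by
  rw [Tinv, add_mul, smul_mul_assoc, smul_mul_assoc, one_mul]
  exact add_mem (smul_mem_laurentBelow K.qinv_mem_laurent (T_simple_mul_mem_laurentBelow i hh))
    (smul_mem_laurentBelow (sub_mem K.qinv_mem_laurent (one_mem _))
      (laurentBelow_mono (Nat.le_succ n) hh))

section Bar

variable {bar : Hk.carrier →+* Hk.carrier} (hbar : IsBar K Hk bar)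
include hbar

lemma bar_smul_T (r : R) (y : W) : bar (r • Hk.T y) = K.conj r • bar (Hk.T y) := by
  rw [hbar, ← one_smul R (Hk.T y), hbar, map_one, one_smul]

lemma bar_T_simple (i : B) : bar (Hk.T (cs.simple i)) = Tinv K Hk i := by
  let u : Hk.carrierˣ := ⟨_, _, T_simple_mul_Tinv K Hk i, Tinv_mul_T_simple K Hk i⟩
  rw [← one_smul R (Hk.T _), hbar, map_one, one_smul, cs.inv_simple]
  exact Ring.inverse_unit u

lemma exists_bar_T_eq (u : W) : ∃ v ∈ laurentBelow K Hk (cs.length u),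
    bar (Hk.T u) = K.qinv ^ cs.length u • Hk.T u + v := by
  induction hn : cs.length u generalizing u with
  | zero =>
    rw [cs.length_eq_zero_iff.1 hn, Hk.T_one, map_one]
    exact ⟨0, zero_mem _, by simp⟩
  | succ n ih =>
    have hu : u ≠ 1 := by rintro rfl; simp at hn
    obtain ⟨i, hi⟩ := cs.exists_leftDescent_of_ne_one hu
    have hlen : cs.length (cs.simple i * u) = n := by
      have := cs.isLeftDescent_iff.1 hi; omega
    obtain ⟨v, hv, hbar_eq⟩ := ih _ hlen
    have hTu : Hk.T u = Hk.T (cs.simple i) * Hk.T (cs.simple i * u) := by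
      rw [Hk.T_mul _ _ (by rw [cs.simple_mul_simple_cancel_left, cs.length_simple]; omega),
        cs.simple_mul_simple_cancel_left]
    refine ⟨(K.qinv ^ n * (K.qinv - 1)) • Hk.T (cs.simple i * u) + Tinv K Hk i * v,
      add_mem (smul_mem_laurentBelow ?_ (T_mem_laurentBelow (by omega)))
        (Tinv_mul_mem_laurentBelow i hv), ?_⟩
    · exact mul_mem (pow_mem K.qinv_mem_laurent n) (sub_mem K.qinv_mem_laurent (one_mem _))
    · rw [hTu, map_mul, bar_T_simple hbar, hbar_eq, mul_add, Tinv, add_mul, smul_mul_assoc,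
        smul_mul_assoc, one_mul, mul_smul_comm]
      module

lemma repr_bar (h : Hk.carrier) (x : W) :
    Hk.basis.repr (bar h) x = ∑ y ∈ (Hk.basis.repr h).support,
      K.conj (Hk.basis.repr h y) * Hk.basis.repr (bar (Hk.T y)) x := by
  conv_lhs => rw [← Hk.sum_repr_smul_T h]
  simp [bar_smul_T hbar, Finsupp.finsetSum_apply]

lemma repr_bar_T (x y : W) : ∃ a ∈ K.laurent, (cs.length y ≤ cs.length x → a = 0) ∧
    Hk.basis.repr (bar (Hk.T y)) x = (if y = x then K.qinv ^ cs.length y else 0) + a := by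
  obtain ⟨v, hv, hbar_eq⟩ := exists_bar_T_eq hbar y
  refine ⟨_, (hv x).1, (hv x).2, ?_⟩
  simp [hbar_eq, Hk.repr_T]

lemma repr_bar_T_self (x : W) : Hk.basis.repr (bar (Hk.T x)) x = K.qinv ^ cs.length x := by
  obtain ⟨a, -, ha, h⟩ := repr_bar_T hbar x x
  rw [h, if_pos rfl, ha le_rfl, add_zero]

lemma repr_bar_T_mem_laurent (x y : W) : Hk.basis.repr (bar (Hk.T y)) x ∈ K.laurent := by
  obtain ⟨a, haL, -, h⟩ := repr_bar_T hbar x y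
  rw [h]
  split_ifs
  · exact add_mem (pow_mem K.qinv_mem_laurent _) haL
  · exact add_mem (zero_mem _) haL

lemma repr_bar_T_eq_zero {x y : W} (hxy : y ≠ x) (hlen : cs.length y ≤ cs.length x) :
    Hk.basis.repr (bar (Hk.T y)) x = 0 := by
  obtain ⟨a, -, ha, h⟩ := repr_bar_T hbar x y
  rw [h, if_neg hxy, ha hlen, add_zero]

variable {w : W} {Cw : Hk.carrier} (hCw : IsKLElt K Hk bar w Cw)
include hCw

lemma repr_eq_q_pow_mul_conj_add {x : W} (hxw : cs.length x ≤ cs.length w) :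
    Hk.basis.repr Cw x = K.q ^ (cs.length w - cs.length x) * K.conj (Hk.basis.repr Cw x) +
      K.q ^ cs.length w * ∑ y ∈ (Hk.basis.repr Cw).support.erase x,
        K.conj (Hk.basis.repr Cw y) * Hk.basis.repr (bar (Hk.T y)) x := by
  have hcoeff : Hk.basis.repr (bar Cw) x = Hk.basis.repr (K.qinv ^ cs.length w • Cw) x := by
    rw [hCw.2.2.2]
  rw [repr_bar hbar, map_smul, Finsupp.smul_apply, smul_eq_mul] at hcoeff
  have hsplit : ∑ y ∈ (Hk.basis.repr Cw).support,
      K.conj (Hk.basis.repr Cw y) * Hk.basis.repr (bar (Hk.T y)) x =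
      K.conj (Hk.basis.repr Cw x) * K.qinv ^ cs.length x +
        ∑ y ∈ (Hk.basis.repr Cw).support.erase x,
          K.conj (Hk.basis.repr Cw y) * Hk.basis.repr (bar (Hk.T y)) x := by
    rw [← repr_bar_T_self hbar x]
    by_cases hx : x ∈ (Hk.basis.repr Cw).support
    · exact (Finset.add_sum_erase _ _ hx).symm
    · rw [Finsupp.notMem_support_iff.1 hx, map_zero, zero_mul, zero_add,
        Finset.erase_eq_of_notMem hx]
  have hq : ∀ n, K.q ^ n * K.qinv ^ n = 1 := fun n => by rw [← mul_pow, K.q_qinv, one_pow]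
  obtain ⟨d, hd⟩ := Nat.exists_eq_add_of_le hxw
  rw [hsplit, hd, pow_add] at hcoeff
  rw [hd, Nat.add_sub_cancel_left, pow_add]
  linear_combination (-(K.q ^ cs.length x * K.q ^ d)) * hcoeff
    + K.q ^ d * K.conj (Hk.basis.repr Cw x) * hq (cs.length x)
    - Hk.basis.repr Cw x * (K.q ^ d * K.qinv ^ d * hq (cs.length x) + hq d)

/-- For `x = w` the truncated subtraction makes the bound `0`, as it should be. -/
theorem repr_mem_zqDegLE (x : W) :
    Hk.basis.repr Cw x ∈ K.zqDegLE ((cs.length w - cs.length x - 1) / 2) := by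
  induction hm : cs.length w - cs.length x using Nat.strong_induction_on generalizing x with
  | _ m ih =>
  subst hm
  by_cases hx0 : Hk.basis.repr Cw x = 0
  · rw [hx0]; exact zero_mem _
  by_cases hxw : x = w
  · rw [hxw, hCw.1]; exact KLRing.zqDegLE_mono (Nat.zero_le _) KLRing.one_mem_zqDegLE
  have hle : bruhatLE cs x w := hCw.2.1 x hx0
  have hlt : cs.length x < cs.length w := hle.length_lt hxw
  refine K.mem_zqDegLE_of_eq_q_pow_mul_conj_add (hCw.2.2.1 x hle hxw) ?_
    (repr_eq_q_pow_mul_conj_add hbar hCw hlt.le)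
  refine mul_mem (pow_mem K.q_mem_laurent _) (sum_mem fun y hy => ?_)
  by_cases hyx : Hk.basis.repr (bar (Hk.T y)) x = 0
  · rw [hyx, mul_zero]; exact zero_mem _
  have hxy : cs.length x < cs.length y :=
    not_le.1 fun h => hyx (repr_bar_T_eq_zero hbar (Finset.ne_of_mem_erase hy) h)
  have hyw : cs.length y ≤ cs.length w :=
    (hCw.2.1 y (Finsupp.mem_support_iff.1 (Finset.mem_of_mem_erase hy))).length_le
  exact mul_mem (K.conj_mem_laurent (K.laurent_of_mem_zqDegLE (ih _ (by omega) y rfl)))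
    (repr_bar_T_mem_laurent hbar x y)

end Bar

end Hecke

section Unitriangular

/-- `P z y` is the entry `P_{y,z}`: the columns of the matrix are the finsupps `P z`. -/
def IsUnitriangular (cs : CoxeterSystem M W) (P : W → W →₀ R) : Prop :=
  (∀ z, P z z = 1) ∧ ∀ z y, P z y ≠ 0 → bruhatLE cs y z

variable (cs) (P : W → W →₀ R)

noncomputable def supportIco (w z : W) : Finset W :=
  (P z).support.filter fun y => bruhatLE cs w y ∧ cs.length y < cs.length z

/-- The left inverse of a unitriangular matrix `P`. -/
noncomputable def triInv (w z : W) : R :=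
  if w = z then 1 else -∑ y ∈ (supportIco cs P w z).attach, triInv w y * P z y
termination_by cs.length z
decreasing_by exact (Finset.mem_filter.1 y.2).2.2

lemma triInv_self (w : W) : triInv cs P w w = 1 := by
  rw [triInv, if_pos rfl]

lemma triInv_of_ne {w z : W} (h : w ≠ z) :
    triInv cs P w z = -∑ y ∈ supportIco cs P w z, triInv cs P w y * P z y := by
  rw [triInv, if_neg h, Finset.sum_attach _ fun y => triInv cs P w y * P z y]

lemma triInv_add_sum (w z : W) :
    triInv cs P w z + ∑ y ∈ supportIco cs P w z, triInv cs P w y * P z y =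
      if w = z then 1 else 0 := by
  split_ifs with h
  · subst h
    have hempty : supportIco cs P w w = ∅ :=
      Finset.filter_false_of_mem fun y _ hy => hy.2.not_ge hy.1.length_le
    rw [triInv_self, hempty, Finset.sum_empty, add_zero]
  · rw [triInv_of_ne cs P h, neg_add_cancel]

lemma eq_triInv_of_add_sum {g : W → W → R}
    (hg : ∀ w z, bruhatLE cs w z →
      g w z + ∑ y ∈ supportIco cs P w z, g w y * P z y = if w = z then 1 else 0)
    {w z : W} (hwz : bruhatLE cs w z) : g w z = triInv cs P w z := by
  induction hn : cs.length z using Nat.strong_induction_on generalizing z with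
  | _ n ih =>
  have hsum : ∑ y ∈ supportIco cs P w z, g w y * P z y =
      ∑ y ∈ supportIco cs P w z, triInv cs P w y * P z y := by
    refine Finset.sum_congr rfl fun y hy => ?_
    have hy := (Finset.mem_filter.1 hy).2
    rw [ih _ (hn ▸ hy.2) hy.1 rfl]
  have := (hg w z hwz).trans (triInv_add_sum cs P w z).symm
  rwa [hsum, add_left_inj] at this

variable {cs P}

lemma finsum_mul_eq_add_sum (hP : IsUnitriangular cs P) {w z : W} (hwz : bruhatLE cs w z)
    (g : W → R) :
    ∑ᶠ y ∈ {y | bruhatLE cs w y ∧ bruhatLE cs y z}, g y * P z y =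
      g z + ∑ y ∈ supportIco cs P w z, g y * P z y := by
  have hz : z ∉ supportIco cs P w z := fun h => (Finset.mem_filter.1 h).2.2.false
  have hgz : g z = g z * P z z := by rw [hP.1 z, mul_one]
  rw [hgz, ← Finset.sum_insert (f := fun y => g y * P z y) hz]
  refine finsum_mem_eq_sum_of_subset _ (fun y ⟨⟨hwy, hyz⟩, hy⟩ => ?_) fun y hy => ?_
  · have hPy : P z y ≠ 0 := right_ne_zero_of_mul hy
    rcases eq_or_ne y z with rfl | hne
    · exact Finset.mem_insert_self _ _
    · exact Finset.mem_insert_of_mem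
        (Finset.mem_filter.2 ⟨Finsupp.mem_support_iff.2 hPy, hwy, hyz.length_lt hne⟩)
  · rcases Finset.mem_insert.1 hy with rfl | hy
    · exact ⟨hwz, Relation.ReflTransGen.refl⟩
    · obtain ⟨hy, hwy, -⟩ := Finset.mem_filter.1 hy
      exact ⟨hwy, hP.2 z y (Finsupp.mem_support_iff.1 hy)⟩

theorem triInv_mem_zqDegLE (K : KLRing R)
    (hP : ∀ y z, P z y ∈ K.zqDegLE ((cs.length z - cs.length y - 1) / 2)) (w z : W) :
    triInv cs P w z ∈ K.zqDegLE ((cs.length z - cs.length w - 1) / 2) := by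
  induction hn : cs.length z using Nat.strong_induction_on generalizing z with
  | _ n ih =>
  by_cases hwz : w = z
  · rw [hwz, triInv_self]
    exact KLRing.zqDegLE_mono (Nat.zero_le _) KLRing.one_mem_zqDegLE
  rw [triInv_of_ne cs P hwz]
  refine neg_mem (sum_mem fun y hy => ?_)
  obtain ⟨-, hwy, hyz⟩ := Finset.mem_filter.1 hy
  have hlen := hwy.length_le
  exact KLRing.zqDegLE_mono (by omega)
    (KLRing.mul_mem_zqDegLE (ih _ (hn ▸ hyz) y rfl) (hP y z))

end Unitriangular

/-- existence and uniqueness of the inverse Kazhdan–Lusztig polynomials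
`Q_{w,y}` (for `w ≤ y`), determined by
`Σ_{w ≤ y ≤ z} (-1)^{ℓ(y)-ℓ(w)} Q_{w,y} P_{y,z} = δ_{w,z}`; moreover each `Q_{w,y} ∈ ℤ[q]`,
`Q_{w,w} = 1` and `deg Q_{w,y} ≤ (ℓ(y)-ℓ(w)-1)/2` for `w < y`.
Here the Kazhdan–Lusztig polynomial `P_{y,z}` is the coefficient `Hk.basis.repr (C z) y`
of the Kazhdan–Lusztig basis element `C z = C_z`. -/
theorem statement3 (K : KLRing R) (Hk : Hecke cs R K.q)
    (bar : Hk.carrier →+* Hk.carrier) (hbar : IsBar K Hk bar)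
    (C : W → Hk.carrier) (hC : ∀ w : W, IsKLElt K Hk bar w (C w)) :
    ∃ Q : W → W → R,
      (∀ w z : W, bruhatLE cs w z →
        (∑ᶠ y ∈ {y : W | bruhatLE cs w y ∧ bruhatLE cs y z},
          (-1 : R) ^ (cs.length y - cs.length w) * Q w y * Hk.basis.repr (C z) y)
          = if w = z then 1 else 0) ∧
      (∀ w y : W, bruhatLE cs w y → K.InZq (Q w y)) ∧
      (∀ w : W, Q w w = 1) ∧
      (∀ w y : W, bruhatLE cs w y → w ≠ y →
        ∃ p : Polynomial ℤ, Polynomial.aeval K.q p = Q w y ∧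
          2 * p.natDegree ≤ cs.length y - cs.length w - 1) ∧
      (∀ Q' : W → W → R,
        (∀ w z : W, bruhatLE cs w z →
          (∑ᶠ y ∈ {y : W | bruhatLE cs w y ∧ bruhatLE cs y z},
            (-1 : R) ^ (cs.length y - cs.length w) * Q' w y * Hk.basis.repr (C z) y)
            = if w = z then 1 else 0) →
        ∀ w y : W, bruhatLE cs w y → Q' w y = Q w y) := by
  set P : W → W →₀ R := fun z => Hk.basis.repr (C z)
  have hP : IsUnitriangular cs P := ⟨fun z => (hC z).1, fun z y => (hC z).2.1 y⟩
  have hsign (k : ℕ) (r : R) : (-1) ^ k * ((-1) ^ k * r) = r := by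
    rw [← mul_assoc, ← mul_pow, neg_one_mul, neg_neg, one_pow, one_mul]
  have hQ (w y : W) : (-1) ^ (cs.length y - cs.length w) * triInv cs P w y ∈
      K.zqDegLE ((cs.length y - cs.length w - 1) / 2) := by
    simpa [zsmul_eq_mul] using Submodule.smul_mem _ ((-1 : ℤ) ^ (cs.length y - cs.length w))
      (triInv_mem_zqDegLE K (fun y z => Hecke.repr_mem_zqDegLE hbar (hC z) y) w y)
  refine ⟨fun w y => (-1) ^ (cs.length y - cs.length w) * triInv cs P w y,
    fun w z hwz => ?_, fun w y _ => ?_, fun w => ?_, fun w y _ _ => ?_, fun Q' hQ' w y hwy => ?_⟩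
  · simp only [hsign]
    rw [finsum_mul_eq_add_sum hP hwz, triInv_add_sum]
  · obtain ⟨p, -, hp⟩ := KLRing.mem_zqDegLE.1 (hQ w y)
    exact ⟨p, hp⟩
  · simp [triInv_self]
  · obtain ⟨p, hdeg, hp⟩ := KLRing.mem_zqDegLE.1 (hQ w y)
    exact ⟨p, hp, by omega⟩
  · have hQ'_eq := eq_triInv_of_add_sum cs P
      (g := fun w y => (-1) ^ (cs.length y - cs.length w) * Q' w y)
      (fun w z hwz => (finsum_mul_eq_add_sum hP hwz _).symm.trans (hQ' w z hwz)) hwy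
    dsimp only
    rw [← hQ'_eq, hsign]

end KLPaper
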